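/- Let the process be φ-mixing. Then for every n ∈ ℕ and every n-cylinder A ∈ 𝒞^n with ℙ(A) > 0, ℙ_A(τ_A ∈ ℛ(A)) ≤ ε(A). -/

import Mathlib

open MeasureTheory ProbabilityTheory Set Filter ENNReal

namespace ReturnTimes

variable {𝒞 : Type*}

/-- Bi-infinite sequences over the alphabet `𝒞`. -/
abbrev Omega (𝒞 : Type*) := ℤ → 𝒞

/-- The shift `T^k`: `(shiftk k x) m = x (m + k)`.  Thus `T = shiftk 1` and
`T^{-k} A = shiftk k ⁻¹' A`. -/
def shiftk (k : ℤ) (x : Omega 𝒞) : Omega 𝒞 := fun m => x (m + k)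

/-- Stationarity: `ℙ` is invariant under the shift. -/
def Stationary [MeasurableSpace 𝒞] (μ : MeasureTheory.Measure (Omega 𝒞)) : Prop :=
  ∀ S : Set (Omega 𝒞), μ (shiftk 1 ⁻¹' S) = μ S

/-- The `n`-cylinder `A = {X_0 = a_0, …, X_{n-1} = a_{n-1}}` given by the word `a`. -/
def cyl (n : ℕ) (a : ℕ → 𝒞) : Set (Omega 𝒞) := {x | ∀ i < n, x (i : ℤ) = a i}

/-- `A^{(w)} = {X_{n-w} = a_{n-w}, …, X_{n-1} = a_{n-1}}`, the cylinder on the last `w`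
symbols of the word `a` (equal to `univ` when `w = 0`). -/
def cylLast (n w : ℕ) (a : ℕ → 𝒞) : Set (Omega 𝒞) :=
  {x | ∀ i : ℕ, n - w ≤ i → i < n → x (i : ℤ) = a i}

/-- The event `{τ_A > t}` for a real `t`, where `τ_A(x) = inf {k ≥ 1 : T^k x ∈ A}`. -/
def tauGT (A : Set (Omega 𝒞)) (t : ℝ) : Set (Omega 𝒞) :=
  {x | ∀ k : ℕ, 1 ≤ k → (k : ℝ) ≤ t → shiftk (k : ℤ) x ∉ A}

/-- The hitting time `τ_A(x) = inf {k ≥ 1 : T^k x ∈ A}`, with values in `ℕ∞`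
(`⊤` if the point never hits `A`). -/
noncomputable def tau (A : Set (Omega 𝒞)) (x : Omega 𝒞) : ℕ∞ :=
  sInf {e : ℕ∞ | ∃ k : ℕ, e = (k : ℕ∞) ∧ 1 ≤ k ∧ shiftk (k : ℤ) x ∈ A}

/-- The period `p_A = min {k ∈ {1,…,n} : A ∩ T^{-k} A ≠ ∅}`. -/
noncomputable def period (n : ℕ) (A : Set (Omega 𝒞)) : ℕ :=
  sInf {k : ℕ | 1 ≤ k ∧ k ≤ n ∧ (A ∩ shiftk (k : ℤ) ⁻¹' A).Nonempty}

/-- The secondary periods `ℛ(A) = {k ∈ {⌊n/p_A⌋ p_A + 1, …, n-1} : A ∩ T^{-k} A ≠ ∅}`. -/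
noncomputable def secondary (n : ℕ) (A : Set (Omega 𝒞)) : Set ℕ :=
  {k : ℕ | (n / period n A) * period n A < k ∧ k < n ∧ (A ∩ shiftk (k : ℤ) ⁻¹' A).Nonempty}

open Classical in
/-- `n_A = min ℛ(A)` if `ℛ(A) ≠ ∅`, and `n_A = n` otherwise. -/
noncomputable def nA (n : ℕ) (A : Set (Omega 𝒞)) : ℕ :=
  if (secondary n A).Nonempty then sInf (secondary n A) else n

/-- The σ-algebra `ℱ_I` generated by the coordinates with indices in `I`. -/
def coordAlg [MeasurableSpace 𝒞] (I : Set ℤ) : MeasurableSpace (Omega 𝒞) :=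
  ⨆ i ∈ I, MeasurableSpace.comap (fun x : Omega 𝒞 => x i) inferInstance

/-- φ-mixing: `φ l` bounds `|ℙ_B(C) - ℙ(C)|` for all `B ∈ ℱ_{{0,…,n}}` with `ℙ(B) > 0`
and all `C ∈ ℱ_{{m : m ≥ n + l + 1}}`, and `φ l → 0` as `l → ∞`. -/
def IsPhiMixing [MeasurableSpace 𝒞] (μ : MeasureTheory.Measure (Omega 𝒞)) (φ : ℕ → ℝ) : Prop :=
  Tendsto φ atTop (nhds 0) ∧
  ∀ (l n : ℕ) (B C : Set (Omega 𝒞)),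
    MeasurableSet[coordAlg (Set.Icc (0 : ℤ) (n : ℤ))] B → 0 < μ B →
    MeasurableSet[coordAlg {i : ℤ | (n : ℤ) + (l : ℤ) + 1 ≤ i}] C →
    |(μ[|B] C).toReal - (μ C).toReal| ≤ φ l

/-- `ζ_A = ℙ_A(τ_A ≠ p_A)`. -/
noncomputable def zeta [MeasurableSpace 𝒞] (μ : MeasureTheory.Measure (Omega 𝒞)) (n : ℕ)
    (A : Set (Omega 𝒞)) : ℝ :=
  (μ[|A] {x | tau A x ≠ (period n A : ℕ∞)}).toReal

/-- `ε(A) = inf_{0 ≤ w ≤ n_A} [(2n + p_A) ℙ(A^{(w)}) + φ(n_A - w)]`. -/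
noncomputable def epsA [MeasurableSpace 𝒞] (μ : MeasureTheory.Measure (Omega 𝒞)) (φ : ℕ → ℝ)
    (n : ℕ) (a : ℕ → 𝒞) : ℝ :=
  (Finset.Iic (nA n (cyl n a))).inf' Finset.nonempty_Iic
    (fun w => ((2 * n + period n (cyl n a) : ℕ) : ℝ) * (μ (cylLast n w a)).toReal
       + φ (nA n (cyl n a) - w))

/-- `f(A,t) = ℙ(A) t e^{-(ζ_A - 16 ε(A)) ℙ(A) t}`. -/
noncomputable def fAt [MeasurableSpace 𝒞] (μ : MeasureTheory.Measure (Omega 𝒞)) (φ : ℕ → ℝ)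
    (n : ℕ) (a : ℕ → 𝒞) (t : ℝ) : ℝ :=
  (μ (cyl n a)).toReal * t *
    Real.exp (-(zeta μ n (cyl n a) - 16 * epsA μ φ n a) * (μ (cyl n a)).toReal * t)

/-- The sojourn time `S_A(x) = sup {k : x ∈ A ∩ T^{-j p_A} A for all j = 1,…,k}` (here `p`
stands for the period `p_A`), with values in `ℕ∞` and `S_A(x) = 0` when the set is empty. -/
noncomputable def sojourn (p : ℕ) (A : Set (Omega 𝒞)) (x : Omega 𝒞) : ℕ∞ :=
  sSup {e : ℕ∞ | ∃ k : ℕ, e = (k : ℕ∞) ∧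
    ∀ j : ℕ, 1 ≤ j → j ≤ k → x ∈ A ∩ shiftk ((j * p : ℕ) : ℤ) ⁻¹' A}

/-- `ρ_i(A) = ℙ(A | ∩_{j=1}^{i} T^{j p_A} A)` (here `p` stands for the period `p_A`;
note `T^{j} A = shiftk (-j) ⁻¹' A` since `T` is invertible). -/
noncomputable def rho [MeasurableSpace 𝒞] (μ : MeasureTheory.Measure (Omega 𝒞)) (p : ℕ)
    (A : Set (Omega 𝒞)) (i : ℕ) : ℝ :=
  (μ[| ⋂ j ∈ Finset.Icc 1 i, shiftk (-((j * p : ℕ) : ℤ)) ⁻¹' A] A).toReal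

/-!
The coordinate measurable space on `𝒞` is arbitrary, so cylinders need not be measurable;
they are replaced by their hulls, in which each prescribed symbol is relaxed to its measurable
atom. A hull is measurable (the alphabet is finite) and has the same outer measure as its
cylinder, since every measurable set is saturated for coordinatewise atom-equivalence.

Fix `w ≤ n_A`. If `τ_A = k ∈ ℛ(A)`, then `n_A ≤ k < n` and `T^k x` lies in the hull `D`
of `A^{(w)}`, so the event lies in `C = ⋃_{n_A ≤ k < n} T^{-k} D`. The set `C` only depends
on coordinates `≥ n + n_A - w`, while the hull of `A` only depends on coordinates `< n`;
φ-mixing with gap `n_A - w` and stationarity give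
`ℙ_A(C) ≤ ℙ(C) + φ(n_A - w) ≤ n ℙ(A^{(w)}) + φ(n_A - w)`.
-/

section MeasurableAtom

variable {ι : Type*} {α : ι → Type*} [∀ i, MeasurableSpace (α i)]

lemma pi_le_comap_measurableAtom :
    (MeasurableSpace.pi : MeasurableSpace (∀ i, α i)) ≤
      MeasurableSpace.comap (fun x i => measurableAtom (x i)) ⊤ := by
  refine iSup_le fun i => ?_
  rintro _ ⟨M, hM, rfl⟩
  refine ⟨{f | f i ⊆ M}, trivial, ?_⟩
  ext x
  exact ⟨fun hx => hx (mem_measurableAtom_self _), fun hx => measurableAtom_subset hM hx⟩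

lemma mem_measurableAtom_pi {x y : ∀ i, α i} (h : ∀ i, y i ∈ measurableAtom (x i)) :
    y ∈ measurableAtom x := by
  simp only [measurableAtom, mem_iInter]
  intro s hxs hs
  obtain ⟨S, -, rfl⟩ := pi_le_comap_measurableAtom s hs
  have hxy : (fun i => measurableAtom (y i)) = fun i => measurableAtom (x i) :=
    funext fun i => measurableAtom_eq_of_mem (h i)
  simpa only [mem_preimage, hxy] using hxs

end MeasurableAtom

lemma measure_eq_of_subset_of_forall_measurableSet {X : Type*} [MeasurableSpace X]
    (μ : Measure X) {E F : Set X} (hEF : E ⊆ F)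
    (hF : ∀ T, MeasurableSet T → E ⊆ T → F ⊆ T) : μ E = μ F :=
  le_antisymm (measure_mono hEF) <| by
    simpa only [measure_toMeasurable] using
      measure_mono (μ := μ) (hF _ (measurableSet_toMeasurable μ E) (subset_toMeasurable μ E))

section Cylinders

def wordCyl (s : Set ℕ) (a : ℕ → 𝒞) : Set (Omega 𝒞) := {x | ∀ i ∈ s, x i = a i}

lemma cylLast_eq_wordCyl (n w : ℕ) (a : ℕ → 𝒞) : cylLast n w a = wordCyl (Ico (n - w) n) a := by
  ext x
  simp only [cylLast, wordCyl, mem_Ico, and_imp]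

variable [MeasurableSpace 𝒞]

def wordCylHull (s : Set ℕ) (a : ℕ → 𝒞) : Set (Omega 𝒞) :=
  {x | ∀ i ∈ s, x i ∈ measurableAtom (a i)}

lemma wordCyl_subset_wordCylHull {s t : Set ℕ} (hts : t ⊆ s) (a : ℕ → 𝒞) :
    wordCyl s a ⊆ wordCylHull t a := fun _ hx i hi => hx i (hts hi) ▸ mem_measurableAtom_self _

lemma measure_wordCyl (μ : Measure (Omega 𝒞)) (s : Set ℕ) (a : ℕ → 𝒞) :
    μ (wordCyl s a) = μ (wordCylHull s a) := by
  classical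
  refine measure_eq_of_subset_of_forall_measurableSet μ (wordCyl_subset_wordCylHull le_rfl a) ?_
  intro T hT hET y hy
  -- `y` lies in the measurable atom of `x ∈ wordCyl s a ⊆ T`.
  let x : Omega 𝒞 := fun j => if 0 ≤ j ∧ j.toNat ∈ s then a j.toNat else y j
  have hx : x ∈ wordCyl s a := fun i hi => by simp [x, hi]
  refine mem_of_mem_measurableAtom (mem_measurableAtom_pi fun j => ?_) hT (hET hx)
  by_cases hj : 0 ≤ j ∧ j.toNat ∈ s
  · simpa only [x, if_pos hj, Int.toNat_of_nonneg hj.1] using hy _ hj.2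
  · simp only [x, if_neg hj, mem_measurableAtom_self]

end Cylinders

lemma shiftk_zero : shiftk (0 : ℤ) = (id : Omega 𝒞 → Omega 𝒞) := by
  funext x m
  simp [shiftk]

lemma shiftk_shiftk (j k : ℤ) (x : Omega 𝒞) : shiftk j (shiftk k x) = shiftk (j + k) x := by
  funext m
  simp only [shiftk, add_assoc]

lemma Stationary.measure_shiftk_preimage [MeasurableSpace 𝒞] {μ : Measure (Omega 𝒞)}
    (hstat : Stationary μ) (k : ℕ) (S : Set (Omega 𝒞)) : μ (shiftk k ⁻¹' S) = μ S := by
  induction k with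
  | zero => simp only [Nat.cast_zero, shiftk_zero, preimage_id]
  | succ k ih =>
    have hshift : shiftk ((k + 1 : ℕ) : ℤ) ⁻¹' S = shiftk 1 ⁻¹' (shiftk k ⁻¹' S) := by
      ext x
      simp only [mem_preimage, shiftk_shiftk, Nat.cast_succ]
    rw [hshift, hstat, ih]

lemma shiftk_mem_of_tau_eq {A : Set (Omega 𝒞)} {x : Omega 𝒞} {k : ℕ}
    (h : tau A x = k) : shiftk k x ∈ A := by
  have hne : {e : ℕ∞ | ∃ j : ℕ, e = j ∧ 1 ≤ j ∧ shiftk j x ∈ A}.Nonempty := by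
    by_contra hemp
    rw [not_nonempty_iff_eq_empty] at hemp
    simp [tau, hemp] at h
  obtain ⟨j, hj, -, hjA⟩ := csInf_mem hne
  rw [← tau, h, Nat.cast_inj] at hj
  exact hj ▸ hjA

section CoordAlg

variable [MeasurableSpace 𝒞]

lemma measurableSet_coordAlg_preimage_eval {I : Set ℤ} {i : ℤ} (hi : i ∈ I) {M : Set 𝒞}
    (hM : MeasurableSet M) : MeasurableSet[coordAlg I] ((fun x : Omega 𝒞 => x i) ⁻¹' M) :=
  le_iSup₂ (f := fun (i : ℤ) (_ : i ∈ I) =>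
    MeasurableSpace.comap (fun x : Omega 𝒞 => x i) inferInstance) i hi _ ⟨M, hM, rfl⟩

lemma coordAlg_le_pi (I : Set ℤ) : coordAlg (𝒞 := 𝒞) I ≤ MeasurableSpace.pi :=
  iSup₂_le fun i _ => (measurable_pi_apply i).comap_le

lemma measurableSet_coordAlg_shiftk_preimage_wordCylHull [Countable 𝒞] {I : Set ℤ} {s : Set ℕ}
    (hs : s.Finite) (a : ℕ → 𝒞) {k : ℤ} (hI : ∀ i ∈ s, (i : ℤ) + k ∈ I) :
    MeasurableSet[coordAlg I] (shiftk k ⁻¹' wordCylHull s a) := by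
  have hset : shiftk k ⁻¹' wordCylHull s a =
      ⋂ i ∈ s, (fun x : Omega 𝒞 => x (i + k)) ⁻¹' measurableAtom (a i) := by
    ext x
    simp only [mem_preimage, mem_iInter]
    rfl
  rw [hset]
  exact .biInter hs.countable fun i hi =>
    measurableSet_coordAlg_preimage_eval (hI i hi) (.measurableAtom_of_countable _)

end CoordAlg

lemma cond_le_cond_of_subset_of_measure_eq {X : Type*} [MeasurableSpace X]
    {μ : Measure X} {s s' t : Set X} (ht : MeasurableSet t) (hss' : s ⊆ s') (hμ : μ s = μ s') :
    μ[t|s] ≤ μ[t|s'] := by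
  rw [cond_apply' ht, cond_apply' ht, hμ]
  gcongr

lemma IsPhiMixing.toReal_cond_le [MeasurableSpace 𝒞] {μ : Measure (Omega 𝒞)} {φ : ℕ → ℝ}
    (hmix : IsPhiMixing μ φ) {l n : ℕ} {B C : Set (Omega 𝒞)}
    (hB : MeasurableSet[coordAlg (Icc 0 (n : ℤ))] B) (hμB : 0 < μ B)
    (hC : MeasurableSet[coordAlg {i : ℤ | (n : ℤ) + (l : ℤ) + 1 ≤ i}] C) :
    (μ[|B] C).toReal ≤ (μ C).toReal + φ l := by
  have := (abs_le.mp (hmix.2 l n B C hB hμB hC)).2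
  linarith

lemma nA_le_of_mem_secondary {n k : ℕ} {A : Set (Omega 𝒞)} (hk : k ∈ secondary n A) :
    nA n A ≤ k := by
  classical
  rw [nA, if_pos ⟨k, hk⟩]
  exact Nat.sInf_le hk

section SecondaryReturns

variable [MeasurableSpace 𝒞]

def suffixHullHits (m n w : ℕ) (a : ℕ → 𝒞) : Set (Omega 𝒞) :=
  ⋃ k ∈ Finset.Ico m n, shiftk (k : ℤ) ⁻¹' wordCylHull (Ico (n - w) n) a

lemma setOf_tau_mem_secondary_subset (n w : ℕ) (a : ℕ → 𝒞) :
    {x | ∃ k ∈ secondary n (cyl n a), tau (cyl n a) x = k} ⊆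
      suffixHullHits (nA n (cyl n a)) n w a := by
  rintro x ⟨k, hk, hτ⟩
  refine mem_biUnion (Finset.mem_Ico.mpr ⟨nA_le_of_mem_secondary hk, hk.2.1⟩) ?_
  exact wordCyl_subset_wordCylHull (fun i hi => hi.2) a (shiftk_mem_of_tau_eq hτ)

lemma measurableSet_coordAlg_suffixHullHits [Countable 𝒞] {m n w : ℕ} (a : ℕ → 𝒞)
    (hw : w ≤ m) :
    MeasurableSet[coordAlg {i : ℤ | ((n - 1 : ℕ) : ℤ) + ((m - w : ℕ) : ℤ) + 1 ≤ i}]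
      (suffixHullHits m n w a) :=
  Finset.measurableSet_biUnion _ fun k hk =>
    measurableSet_coordAlg_shiftk_preimage_wordCylHull (finite_Ico _ _) a fun i hi => by
      simp only [Finset.mem_Ico] at hk
      simp only [mem_Ico] at hi
      show ((n - 1 : ℕ) : ℤ) + ((m - w : ℕ) : ℤ) + 1 ≤ (i : ℤ) + (k : ℤ)
      omega

lemma Stationary.measure_suffixHullHits_le {μ : Measure (Omega 𝒞)} (hstat : Stationary μ)
    (m n w : ℕ) (a : ℕ → 𝒞) :
    μ (suffixHullHits m n w a) ≤ (n - m : ℕ) * μ (cylLast n w a) :=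
  calc μ (suffixHullHits m n w a)
      ≤ ∑ k ∈ Finset.Ico m n, μ (shiftk (k : ℤ) ⁻¹' wordCylHull (Ico (n - w) n) a) :=
        measure_biUnion_finset_le _ _
    _ = ∑ k ∈ Finset.Ico m n, μ (cylLast n w a) := by
        refine Finset.sum_congr rfl fun k _ => ?_
        rw [hstat.measure_shiftk_preimage, cylLast_eq_wordCyl, measure_wordCyl]
    _ = (n - m : ℕ) * μ (cylLast n w a) := by
        rw [Finset.sum_const, Nat.card_Ico, nsmul_eq_mul]

end SecondaryReturns

theorem secondary_return_small_general [Fintype 𝒞] [MeasurableSpace 𝒞]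
    (μ : MeasureTheory.Measure (Omega 𝒞)) [IsProbabilityMeasure μ] (hstat : Stationary μ)
    (φ : ℕ → ℝ) (hmix : IsPhiMixing μ φ)
    (n : ℕ) (a : ℕ → 𝒞) (hA : 0 < μ (cyl n a)) :
    (μ[|cyl n a] {x | ∃ k ∈ secondary n (cyl n a), tau (cyl n a) x = (k : ℕ∞)}).toReal
      ≤ epsA μ φ n a := by
  refine Finset.le_inf' _ _ fun w hw => ?_
  set m := nA n (cyl n a)
  set B := wordCylHull (Iio n) a
  set C := suffixHullHits m n w a
  have hμB : μ (cyl n a) = μ B := measure_wordCyl μ _ a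
  have hB : MeasurableSet[coordAlg (Icc 0 ((n - 1 : ℕ) : ℤ))] B := by
    simpa only [Int.cast_ofNat, add_zero, shiftk_zero, preimage_id] using
      measurableSet_coordAlg_shiftk_preimage_wordCylHull (finite_Iio n) a (k := 0)
        fun i (hi : i < n) => show _ ∧ _ by omega
  have hC := measurableSet_coordAlg_suffixHullHits (n := n) a (Finset.mem_Iic.mp hw)
  calc _ ≤ (μ[|cyl n a] C).toReal :=
        toReal_mono (measure_ne_top _ _) (measure_mono (setOf_tau_mem_secondary_subset n w a))
    _ ≤ (μ[|B] C).toReal := toReal_mono (measure_ne_top _ _) <|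
        cond_le_cond_of_subset_of_measure_eq (coordAlg_le_pi _ _ hC)
          (wordCyl_subset_wordCylHull le_rfl a) hμB
    _ ≤ (μ C).toReal + φ (m - w) := hmix.toReal_cond_le hB (hμB ▸ hA) hC
    _ ≤ ((2 * n + period n (cyl n a) : ℕ) : ℝ) * (μ (cylLast n w a)).toReal + φ (m - w) := by
        gcongr
        calc (μ C).toReal ≤ ((n - m : ℕ) * μ (cylLast n w a)).toReal :=
              toReal_mono (by finiteness) (hstat.measure_suffixHullHits_le m n w a)
          _ = (n - m : ℕ) * (μ (cylLast n w a)).toReal := by rw [toReal_mul, toReal_natCast]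
          _ ≤ _ := by gcongr; omega

/-- **Lemma (secondary returns are rare).**  `ℙ_A(τ_A ∈ ℛ(A)) ≤ ε(A)`. -/
theorem secondary_return_small [Fintype 𝒞] [Nonempty 𝒞] [MeasurableSpace 𝒞]
    (μ : MeasureTheory.Measure (Omega 𝒞)) [IsProbabilityMeasure μ] (hstat : Stationary μ)
    (φ : ℕ → ℝ) (hmix : IsPhiMixing μ φ)
    (n : ℕ) (hn : 1 ≤ n) (a : ℕ → 𝒞) (hA : 0 < μ (cyl n a)) :
    (μ[|cyl n a] {x | ∃ k ∈ secondary n (cyl n a), tau (cyl n a) x = (k : ℕ∞)}).toReal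
      ≤ epsA μ φ n a :=
  secondary_return_small_general μ hstat φ hmix n a hA

end ReturnTimes
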